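/- arXiv:2207.06503 — 8 statements merged into one kernel-verified Lean document; each statement's English description precedes it below -/
import Mathlib

section
/- The expected residual map Φ is concave with respect to the psd order: for psd matrices A, H (with positive traces) and θ ∈ [0,1], θΦ(A) + (1-θ)Φ(H) ⪯ Φ(θA + (1-θ)H), where X ⪯ Y means Y - X is psd. -/
/-!
`Φ` is positively homogeneous of degree one, so concavity reduces to superadditivity on the psd
cone: `Φ X + Φ Y ⪯ Φ (X + Y)`. With `a = tr X`, `b = tr Y` the defect is
`X²/a + Y²/b - (X + Y)²/(a + b) = (b X - a Y)² / (a b (a + b))`, the square of a symmetric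
matrix scaled by a positive number. A psd matrix of trace zero vanishes, which covers `a = 0` or
`b = 0`.
-/

/-- The expected residual map `Φ(M) = M - M²/tr(M)`. -/
noncomputable def Phi {N : ℕ} (M : Matrix (Fin N) (Fin N) ℝ) : Matrix (Fin N) (Fin N) ℝ :=
  M - M.trace⁻¹ • (M * M)

open Matrix

theorem inv_smul_mul_self_add_inv_smul_mul_self_sub {K R : Type*} [Field K] [Ring R]
    [Algebra K R] {a b : K} (ha : a ≠ 0) (hb : b ≠ 0) (hab : a + b ≠ 0) (x y : R) :
    a⁻¹ • (x * x) + b⁻¹ • (y * y) - (a + b)⁻¹ • ((x + y) * (x + y)) =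
      (a * b * (a + b))⁻¹ • ((b • x - a • y) * (b • x - a • y)) := by
  simp only [add_mul, mul_add, sub_mul, mul_sub, smul_mul_assoc, mul_smul_comm, smul_smul,
    smul_sub, smul_add]
  match_scalars <;> field_simp <;> ring

@[simp]
theorem Phi_zero {N : ℕ} : Phi (0 : Matrix (Fin N) (Fin N) ℝ) = 0 := by
  simp [Phi]

theorem Phi_smul {N : ℕ} (c : ℝ) (M : Matrix (Fin N) (Fin N) ℝ) : Phi (c • M) = c • Phi M := by
  rcases eq_or_ne c 0 with rfl | hc
  · simp
  simp only [Phi, trace_smul, smul_mul_smul_comm, smul_sub, smul_smul, smul_eq_mul]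
  congr 2
  field_simp

theorem Phi_add_sub_Phi_add_Phi {N : ℕ} {X Y : Matrix (Fin N) (Fin N) ℝ} (hX : X.trace ≠ 0)
    (hY : Y.trace ≠ 0) (hXY : X.trace + Y.trace ≠ 0) :
    Phi (X + Y) - (Phi X + Phi Y) = (X.trace * Y.trace * (X.trace + Y.trace))⁻¹ •
      ((Y.trace • X - X.trace • Y) * (Y.trace • X - X.trace • Y)) := by
  rw [← inv_smul_mul_self_add_inv_smul_mul_self_sub hX hY hXY, Phi, Phi, Phi, trace_add]
  abel

theorem posSemidef_Phi_add_sub_Phi_add_Phi {N : ℕ} {X Y : Matrix (Fin N) (Fin N) ℝ}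
    (hX : X.PosSemidef) (hY : Y.PosSemidef) : (Phi (X + Y) - (Phi X + Phi Y)).PosSemidef := by
  rcases eq_or_lt_of_le hX.trace_nonneg with hX0 | hXpos
  · simp [hX.trace_eq_zero_iff.mp hX0.symm, PosSemidef.zero]
  rcases eq_or_lt_of_le hY.trace_nonneg with hY0 | hYpos
  · simp [hY.trace_eq_zero_iff.mp hY0.symm, PosSemidef.zero]
  set C := Y.trace • X - X.trace • Y
  have hC : C.IsHermitian := (hX.1.smul (.all _)).sub (hY.1.smul (.all _))
  rw [Phi_add_sub_Phi_add_Phi hXpos.ne' hYpos.ne' (by positivity)]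
  exact (hC.eq ▸ posSemidef_conjTranspose_mul_self C).smul (by positivity)

theorem phi_concave_general {N : ℕ} (A H : Matrix (Fin N) (Fin N) ℝ)
    (hA : A.PosSemidef) (hH : H.PosSemidef)
    (θ : ℝ) (hθ : θ ∈ Set.Icc (0 : ℝ) 1) :
    (Phi (θ • A + (1 - θ) • H) - (θ • Phi A + (1 - θ) • Phi H)).PosSemidef := by
  rw [← Phi_smul, ← Phi_smul]
  exact posSemidef_Phi_add_sub_Phi_add_Phi (hA.smul hθ.1) (hH.smul (sub_nonneg.mpr hθ.2))

/-- `Φ` is concave with respect to the psd order. -/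
theorem phi_concave {N : ℕ} (A H : Matrix (Fin N) (Fin N) ℝ)
    (hA : A.PosSemidef) (hH : H.PosSemidef)
    (htrA : 0 < A.trace) (htrH : 0 < H.trace)
    (θ : ℝ) (hθ : θ ∈ Set.Icc (0 : ℝ) 1) :
    (Phi (θ • A + (1 - θ) • H) - (θ • Phi A + (1 - θ) • Phi H)).PosSemidef :=
  phi_concave_general A H hA hH θ hθ
end

section
/- The expected residual map Φ is monotone with respect to the psd order: for psd matrices A, H with positive traces, Φ(A) ⪯ Φ(A + H). -/
open Matrix

theorem Matrix.IsHermitian.posSemidef_mul_self {n R : Type*} [Fintype n] [CommRing R]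
    [PartialOrder R] [StarRing R] [StarOrderedRing R] {A : Matrix n n R} (hA : A.IsHermitian) :
    (A * A).PosSemidef := by
  simpa only [hA.eq] using posSemidef_conjTranspose_mul_self A

theorem Matrix.PosSemidef.eigenvalues_le_trace {n : Type*} [Fintype n] [DecidableEq n]
    {A : Matrix n n ℝ} (hA : A.PosSemidef) (i : n) : hA.1.eigenvalues i ≤ A.trace := by
  rw [hA.1.trace_eq_sum_eigenvalues]
  exact Finset.single_le_sum (fun j _ => hA.eigenvalues_nonneg j) (Finset.mem_univ i)

theorem Phi_eq_cfc {N : ℕ} {M : Matrix (Fin N) (Fin N) ℝ} (hM : M.IsHermitian) :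
    Phi M = cfc (fun x : ℝ => x - M.trace⁻¹ * (x * x)) M := by
  rw [cfc_sub (fun x => x) (fun x => M.trace⁻¹ * (x * x)) M,
    cfc_const_mul M.trace⁻¹ (fun x => x * x) M, cfc_mul (fun x => x) (fun x => x) M,
    cfc_id' ℝ M]
  rfl

open scoped MatrixOrder in
theorem posSemidef_Phi {N : ℕ} {M : Matrix (Fin N) (Fin N) ℝ} (hM : M.PosSemidef) :
    (Phi M).PosSemidef := by
  rw [← nonneg_iff_posSemidef, Phi_eq_cfc hM.1]
  refine cfc_nonneg fun x hx => ?_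
  rw [hM.1.spectrum_real_eq_range_eigenvalues] at hx
  obtain ⟨i, rfl⟩ := hx
  have h_nonneg := hM.eigenvalues_nonneg i
  have h_le_trace := hM.eigenvalues_le_trace i
  rcases h_nonneg.eq_or_lt with h_zero | h_pos
  · simp [← h_zero]
  · rw [sub_nonneg, inv_mul_le_iff₀ (h_pos.trans_le h_le_trace)]
    exact mul_le_mul_of_nonneg_right h_le_trace h_nonneg

theorem Phi_add_sub_Phi {N : ℕ} {A H : Matrix (Fin N) (Fin N) ℝ} (hA : A.trace ≠ 0)
    (hH : H.trace ≠ 0) (hAH : A.trace + H.trace ≠ 0) :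
    Phi (A + H) - Phi A = (H.trace * A.trace * (A.trace + H.trace))⁻¹ •
      ((H.trace • A - A.trace • H) * (H.trace • A - A.trace • H)) + Phi H := by
  simp only [Phi, trace_add, add_mul, mul_add, sub_mul, mul_sub, mul_smul_comm, smul_mul_assoc]
  match_scalars <;> field_simp <;> ring

/-- `Φ` is monotone with respect to the psd order: `Φ(A) ⪯ Φ(A + H)`. -/
theorem phi_monotone {N : ℕ} (A H : Matrix (Fin N) (Fin N) ℝ)
    (hA : A.PosSemidef) (hH : H.PosSemidef)
    (htrA : 0 < A.trace) (htrH : 0 < H.trace) :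
    (Phi (A + H) - Phi A).PosSemidef := by
  rw [Phi_add_sub_Phi htrA.ne' htrH.ne' (by positivity)]
  have hM : (H.trace • A - A.trace • H).IsHermitian :=
    (hA.1.smul (.all _)).sub (hH.1.smul (.all _))
  exact (hM.posSemidef_mul_self.smul (by positivity)).add (posSemidef_Phi hH)
end

section
/- The concavity defect of the expected residual map has the explicit form: for psd A, H with positive traces and θ ∈ [0,1] with θ̄ = 1-θ, Φ(θA + θ̄H) - θΦ(A) - θ̄Φ(H) = (θθ̄ / (θ tr(A) + θ̄ tr(H))) · (√(tr(H)/tr(A)) A - √(tr(A)/tr(H)) H)². -/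
section

variable {𝕜 R : Type*} [Field 𝕜] [Ring R] [Algebra 𝕜 R]

theorem smul_sub_smul_mul_self {s r : 𝕜} (hsr : s * r = 1) (A H : R) :
    (s • A - r • H) * (s • A - r • H)
      = (s * s) • (A * A) + (r * r) • (H * H) - (A * H + H * A) := by
  simp only [sub_mul, mul_sub, smul_mul_smul_comm, mul_comm r s, hsr, one_smul]
  abel

theorem concavity_defect_sub_inv_smul_mul_self {a h θ s r : 𝕜} (ha : a ≠ 0) (hh : h ≠ 0)
    (ht : θ * a + (1 - θ) * h ≠ 0) (hs : s * s = h / a) (hr : r * r = a / h) (hsr : s * r = 1)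
    (A H : R) :
    (θ • A + (1 - θ) • H)
        - (θ * a + (1 - θ) * h)⁻¹ • ((θ • A + (1 - θ) • H) * (θ • A + (1 - θ) • H))
        - θ • (A - a⁻¹ • (A * A)) - (1 - θ) • (H - h⁻¹ • (H * H))
      = (θ * (1 - θ) / (θ * a + (1 - θ) * h)) • ((s • A - r • H) * (s • A - r • H)) := by
  rw [smul_sub_smul_mul_self hsr, hs, hr]
  simp only [add_mul, mul_add, smul_mul_smul_comm]
  match_scalars <;> field_simp <;> ring

end

theorem phi_concavity_defect_general {N : ℕ} (A H : Matrix (Fin N) (Fin N) ℝ)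
    (htrA : 0 < A.trace) (htrH : 0 < H.trace)
    (θ : ℝ) (hθ : θ ∈ Set.Icc (0 : ℝ) 1) :
    Phi (θ • A + (1 - θ) • H) - θ • Phi A - (1 - θ) • Phi H
      = (θ * (1 - θ) / (θ * A.trace + (1 - θ) * H.trace)) •
        ((Real.sqrt (H.trace / A.trace) • A - Real.sqrt (A.trace / H.trace) • H) *
         (Real.sqrt (H.trace / A.trace) • A - Real.sqrt (A.trace / H.trace) • H)) := by
  have htr : 0 < θ * A.trace + (1 - θ) * H.trace :=
    convex_Ioi (0 : ℝ) htrA htrH hθ.1 (sub_nonneg.2 hθ.2) (add_sub_cancel θ 1)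
  have hsr : √(H.trace / A.trace) * √(A.trace / H.trace) = 1 := by
    rw [← Real.sqrt_mul (by positivity), div_mul_div_cancel₀' htrH.ne', div_self htrA.ne',
      Real.sqrt_one]
  unfold Phi
  rw [Matrix.trace_add, Matrix.trace_smul, Matrix.trace_smul, smul_eq_mul, smul_eq_mul]
  exact concavity_defect_sub_inv_smul_mul_self htrA.ne' htrH.ne' htr.ne'
    (Real.mul_self_sqrt (by positivity)) (Real.mul_self_sqrt (by positivity)) hsr A H

/-- Explicit form of the concavity defect of `Φ`. -/
theorem phi_concavity_defect {N : ℕ} (A H : Matrix (Fin N) (Fin N) ℝ)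
    (hA : A.PosSemidef) (hH : H.PosSemidef)
    (htrA : 0 < A.trace) (htrH : 0 < H.trace)
    (θ : ℝ) (hθ : θ ∈ Set.Icc (0 : ℝ) 1) :
    Phi (θ • A + (1 - θ) • H) - θ • Phi A - (1 - θ) • Phi H
      = (θ * (1 - θ) / (θ * A.trace + (1 - θ) * H.trace)) •
        ((Real.sqrt (H.trace / A.trace) • A - Real.sqrt (A.trace / H.trace) • H) *
         (Real.sqrt (H.trace / A.trace) • A - Real.sqrt (A.trace / H.trace) • H)) :=
  phi_concavity_defect_general A H htrA htrH θ hθ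
end

section
/- One step of RPCholesky at most doubles the low-rank approximation error: for a psd matrix A with tr(A) > 0 and any k ≥ 1, the expectation over the pivot s ∼ diag(A)/tr(A) of tr((A⁽¹⁾) - ⟦A⁽¹⁾⟧_{k-1}) is at most (1 + (λ₁(A)+λ_k(A))/tr(A)) · tr(A - ⟦A⟧_k), where A⁽¹⁾ = A - A(:,s)A(s,:)/a_{ss} is the residual. -/
open Matrix

/-- Sum of the `r` largest eigenvalues (Ky Fan): the supremum over size-`r` index sets of the
sum of the corresponding eigenvalues (listed with multiplicity). Junk value for
non-Hermitian matrices. -/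
noncomputable def sumTopEig {N : ℕ} (A : Matrix (Fin N) (Fin N) ℝ) (r : ℕ) : ℝ :=
  if hA : A.IsHermitian then
    ⨆ s : {s : Finset (Fin N) // s.card = r}, ∑ i ∈ s.1, hA.eigenvalues i
  else 0

/-- `tr(M - ⟦M⟧_r)`: the sum of all eigenvalues of `M` beyond the `r` largest. -/
noncomputable def tailSum {N : ℕ} (A : Matrix (Fin N) (Fin N) ℝ) (r : ℕ) : ℝ :=
  A.trace - sumTopEig A r

/-!
Diagonalize `A = U diag(μ) Uᴴ` and let `S` index the `k` largest eigenvalues, so that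
`tr(A - ⟦A⟧_k) = ∑_{i ∉ S} μ i`. Fix a pivot `s` and put `w = Uᴴ e_s`; in eigen-coordinates the
residual is `diag(μ) - (μ w)(μ w)ᵀ / a_ss`. By Ky Fan's maximum principle,
`tr(A⁽¹⁾ - ⟦A⁽¹⁾⟧_{k-1}) ≤ tr(R · Uᴴ A⁽¹⁾ U)` whenever `0 ≤ R ≤ 1` and `tr(1 - R) = k - 1`. Take for
`1 - R` the projection onto the coordinates in `S` orthogonal to the restriction of `w` to `S`:
a direct computation gives `a_ss · tr(R · Uᴴ A⁽¹⁾ U) ≤ a_ss · tr(A - ⟦A⟧_k) + λ₁ τ_s`, where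
`τ_s = ∑_{i ∉ S} μ i w_i²` is the `s`-th diagonal entry of `A - ⟦A⟧_k`. Averaging with weights
`a_ss / tr A`, using `∑ a_ss ≤ tr A` and `∑ τ_s = tr(A - ⟦A⟧_k)`, and finally `λ_k ≥ 0`, gives
the claim.
-/

open Finset

section Rearrangement

variable {ι : Type*} [Fintype ι]

theorem exists_card_eq_forall_mem_forall_notMem_le {β : Type*} [AddCommGroup β] [LinearOrder β]
    [IsOrderedAddMonoid β] (μ : ι → β) {r : ℕ} (hr : r ≤ Fintype.card ι) :
    ∃ S : Finset ι, #S = r ∧ ∀ i ∈ S, ∀ j ∉ S, μ j ≤ μ i := by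
  classical
  obtain ⟨S₀, hS₀⟩ := Finset.exists_subset_card_eq (s := (univ : Finset ι)) (by simpa using hr)
  obtain ⟨S, hS, hmax⟩ := (univ.powersetCard r).exists_max_image (fun S => ∑ i ∈ S, μ i)
    ⟨S₀, mem_powersetCard.2 ⟨subset_univ _, hS₀.2⟩⟩
  have hcard : #S = r := (mem_powersetCard.1 hS).2
  refine ⟨S, hcard, fun i hi j hj => not_lt.1 fun hlt => ?_⟩
  have hj' : j ∉ S.erase i := fun h => hj (mem_of_mem_erase h)
  have hswap := hmax (insert j (S.erase i)) (mem_powersetCard.2 ⟨subset_univ _, by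
    rw [card_insert_of_notMem hj', card_erase_of_mem hi, hcard]
    have := card_pos.2 ⟨i, hi⟩; omega⟩)
  rw [sum_insert hj', sum_erase_eq_sub hi, add_sub_left_comm, add_le_iff_nonpos_right,
    sub_nonpos] at hswap
  exact lt_irrefl _ (hlt.trans_le hswap)

theorem sum_mul_le_sum_of_forall_mem_forall_notMem_le {μ t : ι → ℝ} {S : Finset ι}
    (hS : ∀ i ∈ S, ∀ j ∉ S, μ j ≤ μ i) (ht0 : ∀ i, 0 ≤ t i) (ht1 : ∀ i, t i ≤ 1)
    (hsum : ∑ i, t i = #S) :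
    ∑ i, μ i * t i ≤ ∑ i ∈ S, μ i := by
  classical
  rcases S.eq_empty_or_nonempty with rfl | hne
  · have ht : ∀ i, t i = 0 := fun i =>
      (sum_eq_zero_iff_of_nonneg fun i _ => ht0 i).1 (by simpa using hsum) i (mem_univ i)
    simp [ht]
  -- `m` separates the values of `μ` on `S` from those off `S`
  set m := S.inf' hne μ
  have hin : ∀ i ∈ S, μ i * t i ≤ μ i + m * (t i - 1) := fun i hi => by
    nlinarith [inf'_le μ hi, ht1 i]
  have hout : ∀ i ∈ Sᶜ, μ i * t i ≤ m * t i := fun i hi => by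
    have : μ i ≤ m := le_inf' hne μ fun j hj => hS j hj i (mem_compl.1 hi)
    nlinarith [ht0 i]
  have hsplit := sum_add_sum_compl S t
  calc ∑ i, μ i * t i = ∑ i ∈ S, μ i * t i + ∑ i ∈ Sᶜ, μ i * t i := (sum_add_sum_compl _ _).symm
    _ ≤ ∑ i ∈ S, (μ i + m * (t i - 1)) + ∑ i ∈ Sᶜ, m * t i :=
      add_le_add (sum_le_sum hin) (sum_le_sum hout)
    _ = ∑ i ∈ S, μ i := by
      rw [sum_add_distrib, ← mul_sum, ← mul_sum, sum_sub_distrib, sum_const, nsmul_one]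
      linear_combination m * (hsplit.trans hsum)

end Rearrangement

section Unitary

variable {n : Type*} [Fintype n] [DecidableEq n] {U A : Matrix n n ℝ} {μ : n → ℝ}

theorem conjTranspose_mul_self_of_mem_unitaryGroup (hU : U ∈ unitaryGroup n ℝ) :
    Uᴴ * U = 1 := by
  rw [← star_eq_conjTranspose]; exact Unitary.star_mul_self_of_mem hU

theorem mul_conjTranspose_self_of_mem_unitaryGroup (hU : U ∈ unitaryGroup n ℝ) :
    U * Uᴴ = 1 := by
  rw [← star_eq_conjTranspose]; exact Unitary.mul_star_self_of_mem hU

theorem sum_sq_apply_of_mem_unitaryGroup (hU : U ∈ unitaryGroup n ℝ) (i : n) :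
    ∑ s, U s i ^ 2 = 1 := by
  simpa [mul_apply, sq] using congrFun (congrFun (conjTranspose_mul_self_of_mem_unitaryGroup hU) i) i

theorem Matrix.IsHermitian.eq_eigenvectorUnitary_mul_diagonal_mul {M : Matrix n n ℝ}
    (hM : M.IsHermitian) :
    M = (hM.eigenvectorUnitary : Matrix n n ℝ) * diagonal hM.eigenvalues *
      (hM.eigenvectorUnitary : Matrix n n ℝ)ᴴ := by
  conv_lhs => rw [hM.spectral_theorem]
  simp [star_eq_conjTranspose]

theorem diag_eq_sum_of_eq_mul_diagonal_mul (hA : A = U * diagonal μ * Uᴴ) (s : n) :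
    A s s = ∑ i, μ i * U s i ^ 2 := by
  rw [hA, mul_apply]
  simp [mul_diagonal, sq, mul_comm, mul_left_comm]

end Unitary

section SumTopEig

variable {N : ℕ} {M : Matrix (Fin N) (Fin N) ℝ}

theorem sum_eigenvalues_le_sumTopEig (hM : M.IsHermitian) (S : Finset (Fin N)) :
    ∑ i ∈ S, hM.eigenvalues i ≤ sumTopEig M #S := by
  rw [sumTopEig, dif_pos hM]
  exact le_ciSup (f := fun s : {s : Finset (Fin N) // #s = #S} => ∑ i ∈ s.1, hM.eigenvalues i)
    (Set.finite_range _).bddAbove ⟨S, rfl⟩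

theorem sumTopEig_eq_sum (hM : M.IsHermitian) {S : Finset (Fin N)}
    (hS : ∀ i ∈ S, ∀ j ∉ S, hM.eigenvalues j ≤ hM.eigenvalues i) :
    sumTopEig M #S = ∑ i ∈ S, hM.eigenvalues i := by
  refine le_antisymm ?_ (sum_eigenvalues_le_sumTopEig hM S)
  rw [sumTopEig, dif_pos hM]
  have : Nonempty {s : Finset (Fin N) // #s = #S} := ⟨⟨S, rfl⟩⟩
  refine ciSup_le fun T => ?_
  simpa [T.2] using sum_mul_le_sum_of_forall_mem_forall_notMem_le hS
    (t := fun i => if i ∈ T.1 then 1 else 0) (fun i => by positivity) (fun i => by split_ifs <;> simp)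
    (by simp [T.2])

theorem sumTopEig_le_sumTopEig_succ (hM : M.PosSemidef) {r : ℕ} (hr : r < N) :
    sumTopEig M r ≤ sumTopEig M (r + 1) := by
  obtain ⟨S, hcard, hS⟩ := exists_card_eq_forall_mem_forall_notMem_le hM.isHermitian.eigenvalues
    (by simpa using hr.le)
  obtain ⟨j, hj⟩ : ∃ j, j ∉ S := not_forall.1 fun h => by
    simp [eq_univ_iff_forall.2 h] at hcard; omega
  calc sumTopEig M r = ∑ i ∈ S, hM.isHermitian.eigenvalues i := by
        rw [← hcard, sumTopEig_eq_sum _ hS]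
    _ ≤ ∑ i ∈ insert j S, hM.isHermitian.eigenvalues i := by
      rw [sum_insert hj]; exact le_add_of_nonneg_left (hM.eigenvalues_nonneg j)
    _ ≤ sumTopEig M (r + 1) := by
      simpa [card_insert_of_notMem hj, hcard] using sum_eigenvalues_le_sumTopEig _ (insert j S)

/-- **Ky Fan's maximum principle**. -/
theorem trace_mul_le_sumTopEig (hM : M.IsHermitian) {Q : Matrix (Fin N) (Fin N) ℝ} {r : ℕ}
    (hQ : Q.PosSemidef) (hQ1 : (1 - Q).PosSemidef) (htr : Q.trace = r) :
    (Q * M).trace ≤ sumTopEig M r := by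
  set U : Matrix (Fin N) (Fin N) ℝ := ↑hM.eigenvectorUnitary
  have hUU := conjTranspose_mul_self_of_mem_unitaryGroup hM.eigenvectorUnitary.2
  have hUU' := mul_conjTranspose_self_of_mem_unitaryGroup hM.eigenvectorUnitary.2
  -- the weight that `Q` puts on the `i`-th eigenvector of `M`
  set t : Fin N → ℝ := fun i => (Uᴴ * Q * U) i i
  have ht0 : ∀ i, 0 ≤ t i := fun i => (hQ.conjTranspose_mul_mul_same U).diag_nonneg
  have ht1 : ∀ i, t i ≤ 1 := fun i => by
    have := (hQ1.conjTranspose_mul_mul_same U).diag_nonneg (i := i)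
    rwa [Matrix.mul_sub, Matrix.sub_mul, Matrix.mul_one, hUU, Matrix.sub_apply, one_apply_eq,
      sub_nonneg] at this
  have hsum : ∑ i, t i = r := by
    change (Uᴴ * Q * U).trace = r
    rw [← htr, trace_mul_cycle, hUU', Matrix.one_mul]
  have htrace : (Q * M).trace = ∑ i, hM.eigenvalues i * t i := by
    conv_lhs => rw [hM.eq_eigenvectorUnitary_mul_diagonal_mul]
    rw [← Matrix.mul_assoc, ← Matrix.mul_assoc, trace_mul_comm, ← Matrix.mul_assoc,
      ← Matrix.mul_assoc]
    simp only [trace, diag_apply, mul_diagonal, mul_comm]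
    rfl
  have hr : r ≤ N := by
    have := sum_le_sum fun i (_ : i ∈ univ) => ht1 i
    rw [hsum] at this
    exact_mod_cast (by simpa using this : (r : ℝ) ≤ N)
  obtain ⟨S, hcard, hS⟩ :=
    exists_card_eq_forall_mem_forall_notMem_le hM.eigenvalues (by simpa using hr)
  rw [htrace, ← hcard, sumTopEig_eq_sum hM hS]
  exact sum_mul_le_sum_of_forall_mem_forall_notMem_le hS ht0 ht1 (hsum.trans (by rw [hcard]))

theorem tailSum_le_trace_mul (hM : M.IsHermitian) {U : Matrix (Fin N) (Fin N) ℝ}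
    (hU : U ∈ unitaryGroup (Fin N) ℝ) {R : Matrix (Fin N) (Fin N) ℝ} {r : ℕ}
    (hR : R.PosSemidef) (hR1 : (1 - R).PosSemidef) (htr : (1 - R).trace = r) :
    tailSum M r ≤ (R * (Uᴴ * M * U)).trace := by
  have hUU := conjTranspose_mul_self_of_mem_unitaryGroup hU
  have hUU' := mul_conjTranspose_self_of_mem_unitaryGroup hU
  have hconj : 1 - U * (1 - R) * Uᴴ = U * R * Uᴴ := by
    rw [Matrix.mul_sub, Matrix.sub_mul, Matrix.mul_one, hUU', sub_sub_cancel]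
  have hKyFan := trace_mul_le_sumTopEig hM (Q := U * (1 - R) * Uᴴ)
    (by simpa using hR1.conjTranspose_mul_mul_same Uᴴ)
    (by rw [hconj]; simpa using hR.conjTranspose_mul_mul_same Uᴴ)
    (by rw [trace_mul_cycle, hUU, Matrix.one_mul, htr])
  have htrace : (U * (1 - R) * Uᴴ * M).trace = M.trace - (R * (Uᴴ * M * U)).trace := by
    have hM' : (Uᴴ * (M * U)).trace = M.trace := by
      rw [trace_mul_comm, Matrix.mul_assoc, hUU', Matrix.mul_one]
    simp only [Matrix.mul_assoc]
    rw [trace_mul_comm, Matrix.mul_assoc, Matrix.mul_assoc, Matrix.sub_mul, Matrix.one_mul,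
      trace_sub, hM']
  rw [tailSum]
  linarith

end SumTopEig

section ComplementProjection

variable {n : Type*} [Fintype n] [DecidableEq n] {S : Finset n} {v : n → ℝ}

theorem exists_unit_parallel_on (w : n → ℝ) (hS : S.Nonempty) :
    ∃ (v : n → ℝ) (c : ℝ), (∀ i ∉ S, v i = 0) ∧ ∑ i, v i ^ 2 = 1 ∧ ∀ i ∈ S, w i = c * v i := by
  obtain ⟨π, hπ⟩ : ∃ π, ∑ i ∈ S, w i ^ 2 = π := ⟨_, rfl⟩
  rcases (hπ ▸ sum_nonneg fun i _ => sq_nonneg (w i) : 0 ≤ π).eq_or_lt with hπ0 | hπ0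
  · obtain ⟨i₀, hi₀⟩ := hS
    refine ⟨Pi.single i₀ 1, 0, fun i hi => Pi.single_eq_of_ne (by rintro rfl; exact hi hi₀) _,
      ?_, fun i hi => ?_⟩
    · rw [Fintype.sum_eq_single i₀ fun j hj => by simp [Pi.single_eq_of_ne hj]]
      simp
    · simpa using (sum_eq_zero_iff_of_nonneg fun i _ => sq_nonneg (w i)).1 (hπ.trans hπ0.symm) i hi
  · refine ⟨fun i => if i ∈ S then w i / √π else 0, √π, fun i hi => if_neg hi, ?_, fun i hi => ?_⟩
    · simp only [ite_pow, div_pow, Real.sq_sqrt hπ0.le, ne_eq, OfNat.ofNat_ne_zero,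
        not_false_eq_true, zero_pow, sum_ite_mem, univ_inter, ← sum_div, hπ]
      exact div_self hπ0.ne'
    · simp only [if_pos hi, mul_div_cancel₀ _ (Real.sqrt_pos.2 hπ0).ne']

theorem posSemidef_diagonal_add_vecMulVec :
    (diagonal (fun i => if i ∈ S then 0 else 1) + vecMulVec v v).PosSemidef := by
  refine (PosSemidef.diagonal fun i => ?_).add ?_
  · dsimp only; split_ifs <;> norm_num
  · simpa using posSemidef_vecMulVec_self_star v

theorem posSemidef_one_sub_diagonal_add_vecMulVec (hv : ∀ i ∉ S, v i = 0)
    (hv1 : ∑ i, v i ^ 2 = 1) :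
    (1 - (diagonal (fun i => if i ∈ S then 0 else 1) + vecMulVec v v)).PosSemidef := by
  refine .of_dotProduct_mulVec_nonneg
    (isHermitian_one.sub posSemidef_diagonal_add_vecMulVec.isHermitian) fun x => ?_
  have hvx : v ⬝ᵥ x = ∑ i ∈ S, v i * x i := by
    rw [dotProduct, ← sum_subset (subset_univ S) fun i _ hi => by rw [hv i hi, zero_mul]]
  have hv1' : ∑ i ∈ S, v i ^ 2 = 1 := by
    rwa [sum_subset (subset_univ S) fun i _ hi => by rw [hv i hi, sq, zero_mul]]
  have h1R : 1 - (diagonal (fun i => if i ∈ S then 0 else 1) + vecMulVec v v)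
      = diagonal (fun i => if i ∈ S then 1 else 0) - vecMulVec v v := by
    rw [← diagonal_one, ← sub_sub, diagonal_sub]
    congr 2; ext i; split_ifs <;> norm_num
  have hquad : star x ⬝ᵥ ((1 - (diagonal (fun i => if i ∈ S then 0 else 1) + vecMulVec v v)) *ᵥ x)
      = ∑ i ∈ S, x i ^ 2 - (v ⬝ᵥ x) ^ 2 := by
    rw [h1R, star_trivial, sub_mulVec, vecMulVec_mulVec, dotProduct_sub,
      op_smul_eq_smul, dotProduct_smul, smul_eq_mul, dotProduct_comm x v, sq]
    congr 1
    simp [dotProduct, mulVec_diagonal, sq]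
  rw [hquad, hvx, sub_nonneg]
  simpa [hv1'] using sum_mul_sq_le_sq_mul_sq S v x

theorem trace_one_sub_diagonal_add_vecMulVec (hS : S.Nonempty) (hv1 : ∑ i, v i ^ 2 = 1) :
    (1 - (diagonal (fun i => if i ∈ S then 0 else 1) + vecMulVec v v)).trace =
      ((#S - 1 : ℕ) : ℝ) := by
  rw [Nat.cast_sub hS.card_pos]
  simp [trace_sub, trace_add, dotProduct, ← sq, hv1, sum_ite, filter_notMem_eq_sdiff,
    ← compl_eq_univ_sdiff, card_compl, Nat.cast_sub (card_le_univ S)]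
  ring

theorem trace_diagonal_add_vecMulVec_mul (μ y : n → ℝ) (a : ℝ) :
    ((diagonal (fun i => if i ∈ S then 0 else 1) + vecMulVec v v) *
        (diagonal μ - a⁻¹ • vecMulVec y y)).trace =
      ∑ i ∈ Sᶜ, (μ i - a⁻¹ * y i ^ 2) + (∑ i, μ i * v i ^ 2 - a⁻¹ * (v ⬝ᵥ y) ^ 2) := by
  rw [Matrix.add_mul, trace_add, vecMulVec_mul, trace_vecMulVec]
  congr 1
  · simp [trace, diagonal_mul, vecMulVec_apply, sq, sum_ite, filter_notMem_eq_sdiff,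
      compl_eq_univ_sdiff]
  · simp only [vecMul_sub, vecMul_smul, vecMul_vecMulVec, dotProduct_sub,
      dotProduct_smul, smul_eq_mul]
    simp [dotProduct, vecMul_diagonal, sq, mul_comm, mul_left_comm]

theorem mul_trace_diagonal_add_vecMulVec_mul_le {μ w : n → ℝ} {c lam a : ℝ}
    (hμ : ∀ i, 0 ≤ μ i) (hμlam : ∀ i, μ i ≤ lam) (hv : ∀ i ∉ S, v i = 0)
    (hv1 : ∑ i, v i ^ 2 = 1) (hw : ∀ i ∈ S, w i = c * v i) (ha : ∑ i, μ i * w i ^ 2 = a)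
    (ha0 : 0 < a) :
    a * ((diagonal (fun i => if i ∈ S then 0 else 1) + vecMulVec v v) *
        (diagonal μ - a⁻¹ • vecMulVec (fun i => μ i * w i) (fun i => μ i * w i))).trace ≤
      a * ∑ i ∈ Sᶜ, μ i + lam * ∑ i ∈ Sᶜ, μ i * w i ^ 2 := by
  set m := ∑ i, μ i * v i ^ 2
  set τ := ∑ i ∈ Sᶜ, μ i * w i ^ 2
  have hmS : m = ∑ i ∈ S, μ i * v i ^ 2 :=
    (sum_subset (subset_univ S) fun i _ hi => by simp [hv i hi]).symm
  have hvy : v ⬝ᵥ (fun i => μ i * w i) = c * m := by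
    rw [dotProduct, ← sum_subset (subset_univ S) fun i _ hi => by simp [hv i hi], hmS, mul_sum]
    exact sum_congr rfl fun i hi => by rw [hw i hi]; ring
  have ha' : a = c ^ 2 * m + τ := by
    rw [← ha, ← sum_add_sum_compl S, hmS, mul_sum]
    congr 1
    exact sum_congr rfl fun i hi => by rw [hw i hi]; ring
  have hm : m ≤ lam := by
    calc m ≤ ∑ i, lam * v i ^ 2 := sum_le_sum fun i _ => by nlinarith [hμlam i, sq_nonneg (v i)]
      _ = lam := by rw [← mul_sum, hv1, mul_one]
  have hτ : 0 ≤ τ := sum_nonneg fun i _ => mul_nonneg (hμ i) (sq_nonneg _)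
  have hy : 0 ≤ ∑ i ∈ Sᶜ, (μ i * w i) ^ 2 := sum_nonneg fun i _ => sq_nonneg _
  rw [trace_diagonal_add_vecMulVec_mul, hvy, sum_sub_distrib, ← mul_sum]
  calc a * (∑ i ∈ Sᶜ, μ i - a⁻¹ * ∑ i ∈ Sᶜ, (μ i * w i) ^ 2 + (m - a⁻¹ * (c * m) ^ 2))
      = a * ∑ i ∈ Sᶜ, μ i - ∑ i ∈ Sᶜ, (μ i * w i) ^ 2 + m * τ := by
        field_simp
        rw [ha']
        ring
    _ ≤ a * ∑ i ∈ Sᶜ, μ i + lam * τ := by nlinarith [mul_le_mul_of_nonneg_right hm hτ]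

end ComplementProjection

def pivotResidual {n R : Type*} [Field R] (A : Matrix n n R) (s : n) : Matrix n n R :=
  A - (A s s)⁻¹ • vecMulVec (fun i => A i s) (A s)

theorem Matrix.IsHermitian.pivotResidual {n : Type*} {A : Matrix n n ℝ}
    (hA : A.IsHermitian) (s : n) : (pivotResidual A s).IsHermitian := by
  refine IsHermitian.ext fun i j => ?_
  have hsym : ∀ i j, A j i = A i j := fun i j => by simpa using hA.apply i j
  simp [_root_.pivotResidual, vecMulVec_apply, hsym _ s, hsym i j, mul_comm]

section PivotResidual

variable {N : ℕ} {U A : Matrix (Fin N) (Fin N) ℝ} {μ : Fin N → ℝ}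

theorem conjTranspose_mul_pivotResidual_mul (hU : U ∈ unitaryGroup (Fin N) ℝ)
    (hA : A = U * diagonal μ * Uᴴ) (s : Fin N) :
    Uᴴ * pivotResidual A s * U =
      diagonal μ - (A s s)⁻¹ • vecMulVec (fun i => μ i * U s i) (fun i => μ i * U s i) := by
  have hUU := conjTranspose_mul_self_of_mem_unitaryGroup hU
  have hUA : Uᴴ * A = diagonal μ * Uᴴ := by
    rw [hA, ← Matrix.mul_assoc, ← Matrix.mul_assoc, hUU, Matrix.one_mul]
  have hAU : A * U = U * diagonal μ := by
    rw [hA, Matrix.mul_assoc, hUU, Matrix.mul_one]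
  have hcol : Uᴴ *ᵥ (fun i => A i s) = fun i => μ i * U s i := by
    ext i
    have h := congrFun (congrFun hUA i) s
    rw [diagonal_mul, conjTranspose_apply, star_trivial] at h
    rw [← h]
    rfl
  have hrow : A s ᵥ* U = fun i => μ i * U s i := by
    ext i
    have h := congrFun (congrFun hAU s) i
    rw [mul_diagonal, mul_comm] at h
    rw [← h, vecMul, dotProduct, mul_apply]
  rw [pivotResidual, Matrix.mul_sub, Matrix.sub_mul, hUA, Matrix.mul_assoc, hUU, Matrix.mul_one,
    Matrix.mul_smul, Matrix.smul_mul, mul_vecMulVec, vecMulVec_mul, hcol, hrow]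

theorem mul_tailSum_pivotResidual_le {lam : ℝ} (hU : U ∈ unitaryGroup (Fin N) ℝ)
    (hA : A = U * diagonal μ * Uᴴ) (hμ : ∀ i, 0 ≤ μ i)
    (hμlam : ∀ i, μ i ≤ lam) {S : Finset (Fin N)} (hS : S.Nonempty) {s : Fin N}
    (hs : 0 < A s s) :
    A s s * tailSum (pivotResidual A s) (#S - 1) ≤
      A s s * ∑ i ∈ Sᶜ, μ i + lam * ∑ i ∈ Sᶜ, μ i * U s i ^ 2 := by
  have hAh : A.IsHermitian := hA ▸ isHermitian_mul_mul_conjTranspose U (isHermitian_diagonal μ)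
  obtain ⟨v, c, hv, hv1, hw⟩ := exists_unit_parallel_on (fun i => U s i) hS
  have htail := tailSum_le_trace_mul (hAh.pivotResidual s) hU posSemidef_diagonal_add_vecMulVec
    (posSemidef_one_sub_diagonal_add_vecMulVec hv hv1) (trace_one_sub_diagonal_add_vecMulVec hS hv1)
  rw [conjTranspose_mul_pivotResidual_mul hU hA] at htail
  exact (mul_le_mul_of_nonneg_left htail hs.le).trans <| mul_trace_diagonal_add_vecMulVec_mul_le
    hμ hμlam hv hv1 hw (diag_eq_sum_of_eq_mul_diagonal_mul hA s).symm hs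

end PivotResidual

theorem sum_div_mul_le_of_mul_le {ι : Type*} {F : Finset ι} {a f τ : ι → ℝ} {t T c d : ℝ}
    (ht : 0 < t) (ha : ∑ i ∈ F, a i ≤ t) (hτ : ∑ i ∈ F, τ i ≤ T) (hT : 0 ≤ T) (hc : 0 ≤ c)
    (hd : 0 ≤ d) (hf : ∀ i ∈ F, a i * f i ≤ a i * T + c * τ i) :
    ∑ i ∈ F, a i / t * f i ≤ (1 + (c + d) / t) * T := by
  calc ∑ i ∈ F, a i / t * f i = (∑ i ∈ F, a i * f i) / t := by
        rw [sum_div]; exact sum_congr rfl fun i _ => div_mul_eq_mul_div _ _ _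
    _ ≤ ((∑ i ∈ F, a i) * T + c * ∑ i ∈ F, τ i) / t := by
        rw [sum_mul, mul_sum, ← sum_add_distrib]
        exact div_le_div_of_nonneg_right (sum_le_sum hf) ht.le
    _ ≤ (t * T + c * T + d * T) / t := by
        refine div_le_div_of_nonneg_right ?_ ht.le
        nlinarith [mul_le_mul_of_nonneg_right ha hT, mul_le_mul_of_nonneg_left hτ hc,
          mul_nonneg hd hT]
    _ = (1 + (c + d) / t) * T := by field_simp; ring

/-- One step of RPCholesky at most doubles the low-rank approximation error:
the expectation over the pivot `s ~ diag(A)/tr(A)` of `tr(A⁽¹⁾ - ⟦A⁽¹⁾⟧_{k-1})` is at most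
`(1 + (λ₁(A) + λ_k(A))/tr A) · tr(A - ⟦A⟧_k)`.  Here `λ₁(A) = sumTopEig A 1` and
`λ_k(A) = sumTopEig A k - sumTopEig A (k-1)`. -/
theorem rpcholesky_error_doubling_step {N k : ℕ} (hk : 1 ≤ k) (hkN : k ≤ N)
    (A : Matrix (Fin N) (Fin N) ℝ) (hA : A.PosSemidef) (htr : 0 < A.trace) :
    ∑ s ∈ Finset.univ.filter (fun s => 0 < A s s),
        (A s s / A.trace) *
          tailSum (A - (A s s)⁻¹ • Matrix.vecMulVec (fun i => A i s) (A s)) (k - 1)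
      ≤ (1 + (sumTopEig A 1 + (sumTopEig A k - sumTopEig A (k - 1))) / A.trace) *
          tailSum A k := by
  have hH := hA.isHermitian
  set U : Matrix (Fin N) (Fin N) ℝ := ↑hH.eigenvectorUnitary
  set μ := hH.eigenvalues
  have hU : U ∈ unitaryGroup (Fin N) ℝ := hH.eigenvectorUnitary.2
  obtain ⟨S, hcard, hS⟩ := exists_card_eq_forall_mem_forall_notMem_le μ (by simpa using hkN)
  obtain ⟨i₀, hi₀⟩ : S.Nonempty := card_pos.1 (by omega)
  have hμlam : ∀ i, μ i ≤ sumTopEig A 1 := fun i => by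
    simpa using sum_eigenvalues_le_sumTopEig hH {i}
  have hT : tailSum A k = ∑ i ∈ Sᶜ, μ i := by
    rw [tailSum, ← hcard, sumTopEig_eq_sum hH hS, hH.trace_eq_sum_eigenvalues,
      ← sum_add_sum_compl S]
    simp [μ]
  have hτ : ∑ s, ∑ i ∈ Sᶜ, μ i * U s i ^ 2 = ∑ i ∈ Sᶜ, μ i := by
    rw [sum_comm]
    simp [← mul_sum, sum_sq_apply_of_mem_unitaryGroup hU]
  have hgap : 0 ≤ sumTopEig A k - sumTopEig A (k - 1) := sub_nonneg.2 <| by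
    simpa [Nat.sub_add_cancel hk] using sumTopEig_le_sumTopEig_succ hA (r := k - 1) (by omega)
  rw [hT]
  refine sum_div_mul_le_of_mul_le (τ := fun s => ∑ i ∈ Sᶜ, μ i * U s i ^ 2) htr
    (sum_le_sum_of_subset_of_nonneg (filter_subset _ _) fun i _ _ => hA.diag_nonneg)
    (hτ ▸ sum_le_sum_of_subset_of_nonneg (filter_subset _ _) fun i _ _ =>
      sum_nonneg fun j _ => mul_nonneg (hA.eigenvalues_nonneg j) (sq_nonneg _))
    (sum_nonneg fun i _ => hA.eigenvalues_nonneg i)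
    ((hA.eigenvalues_nonneg i₀).trans (hμlam i₀)) hgap fun s hs => ?_
  have := mul_tailSum_pivotResidual_le hU hH.eq_eigenvectorUnitary_mul_diagonal_mul
    hA.eigenvalues_nonneg hμlam ⟨i₀, hi₀⟩ (mem_filter.1 hs).2
  rwa [hcard] at this
end

section
/- Crabtree–Haynsworth identity: for a psd matrix A and index set S with A(S,S) invertible, and indices i, j ∉ S, the (i,j) entry of the Schur complement A/A(S,S) := A(Sᶜ,Sᶜ) - A(Sᶜ,S)A(S,S)⁻¹A(S,Sᶜ) equals det A(S∪{i}, S∪{j}) / det A(S,S). -/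
/-!
Index `A(S∪{i}, S∪{j})` by `Option S`, so that it is a block matrix with corner `A(S,S)` and a
`1 × 1` block `A i j`. The block determinant formula `det = det B * det (D - C B⁻¹ B')`
then says that its determinant is `det A(S,S)` times the `(i,j)` Schur complement entry.
-/

open Matrix

/-- The principal submatrix `A(S,S)`. -/
def subSS {N : ℕ} (A : Matrix (Fin N) (Fin N) ℝ) (S : Finset (Fin N)) :
    Matrix {x // x ∈ S} {x // x ∈ S} ℝ :=
  A.submatrix Subtype.val Subtype.val

/-- The submatrix `A(S∪{i}, S∪{j})`, with the extra row `i` and column `j` indexed by `none`. -/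
def subExt {N : ℕ} (A : Matrix (Fin N) (Fin N) ℝ) (S : Finset (Fin N)) (i j : Fin N) :
    Matrix (Option {x // x ∈ S}) (Option {x // x ∈ S}) ℝ :=
  A.submatrix (fun x => x.elim i Subtype.val) (fun x => x.elim j Subtype.val)

theorem det_option_eq_det_mul_schur {K α : Type*} [Field K] [Fintype α] [DecidableEq α]
    (M : Matrix (Option α) (Option α) K) (h : IsUnit (M.submatrix some some).det) :
    M.det = (M.submatrix some some).det *
      (M none none -
        ∑ a, ∑ b, M none (some a) * (M.submatrix some some)⁻¹ a b * M (some b) none) := by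
  set B := M.submatrix some some
  have : Invertible B := B.invertibleOfIsUnitDet h
  have hblocks : M = (fromBlocks B (of fun a _ => M (some a) none) (of fun _ b => M none (some b))
      (of fun _ _ => M none none)).submatrix
        (Equiv.optionEquivSumPUnit α) (Equiv.optionEquivSumPUnit α) := by
    ext (_ | _) (_ | _) <;> rfl
  conv_lhs => rw [hblocks, det_submatrix_equiv_self, det_fromBlocks₁₁, det_unique (n := Unit),
    invOf_eq_nonsing_inv]
  simp only [Matrix.sub_apply, mul_apply, of_apply, Finset.sum_mul]
  rw [Finset.sum_comm]

theorem subExt_submatrix_some {N : ℕ} (A : Matrix (Fin N) (Fin N) ℝ) (S : Finset (Fin N))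
    (i j : Fin N) : (subExt A S i j).submatrix some some = subSS A S :=
  rfl

theorem crabtree_haynsworth_general {N : ℕ} (A : Matrix (Fin N) (Fin N) ℝ)
    (S : Finset (Fin N)) (i j : Fin N)
    (hdet : IsUnit (subSS A S).det) :
    A i j - ∑ a : {x // x ∈ S}, ∑ b : {x // x ∈ S},
        A i a.val * (subSS A S)⁻¹ a b * A b.val j
      = (subExt A S i j).det / (subSS A S).det := by
  rw [det_option_eq_det_mul_schur (subExt A S i j) hdet, subExt_submatrix_some,
    mul_div_cancel_left₀ _ hdet.ne_zero]
  rfl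

/-- Crabtree–Haynsworth identity: for `i, j ∉ S`, the `(i,j)` entry of the Schur complement
`A/A(S,S)` equals `det A(S∪{i}, S∪{j}) / det A(S,S)`. -/
theorem crabtree_haynsworth {N : ℕ} (A : Matrix (Fin N) (Fin N) ℝ) (hA : A.PosSemidef)
    (S : Finset (Fin N)) (i j : Fin N) (hi : i ∉ S) (hj : j ∉ S)
    (hdet : IsUnit (subSS A S).det) :
    A i j - ∑ a : {x // x ∈ S}, ∑ b : {x // x ∈ S},
        A i a.val * (subSS A S)⁻¹ a b * A b.val j
      = (subExt A S i j).det / (subSS A S).det :=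
  crabtree_haynsworth_general A S i j hdet
end

section
/- The expected trace-norm error of k-DPP sampling equals (k+1)·e_{k+1}(λ)/e_k(λ): if a subset S of size k is drawn with probability det A(S,S) / Σ_{|S'|=k} det A(S',S'), then E[tr(A - Â)] = (k+1) e_{k+1}(λ₁(A),…,λ_N(A)) / e_k(λ₁(A),…,λ_N(A)), where Â = A(:,S)A(S,S)†A(S,:) is the Nyström approximation. -/
open Matrix

/-- The column submatrix `A(:,S)`. -/
def subCols {N : ℕ} (A : Matrix (Fin N) (Fin N) ℝ) (S : Finset (Fin N)) :
    Matrix (Fin N) {x // x ∈ S} ℝ :=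
  A.submatrix id Subtype.val

/-- The row submatrix `A(S,:)`. -/
def subRows {N : ℕ} (A : Matrix (Fin N) (Fin N) ℝ) (S : Finset (Fin N)) :
    Matrix {x // x ∈ S} (Fin N) ℝ :=
  A.submatrix Subtype.val id

/-!
Weighting by `det A(S,S)` turns the expectation into
`Σ_S det A(S,S) · tr(A - Â_S) / Σ_S det A(S,S)`. On `S` the diagonal of the residual `A - Â_S`
vanishes, and for `j ∉ S` the Schur complement formula for the bordered matrix gives
`det A(S,S) · (A - Â_S)_jj = det A(S ∪ {j}, S ∪ {j})`; for positive semidefinite `A` a singular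
`A(S,S)` makes every `A(S ∪ {j}, S ∪ {j})` singular as well. Summing over `S`, every `(k+1)`-set
arises `k+1` times, so the numerator is `(k+1) Σ_{|T|=k+1} det A(T,T)`. Finally
`Σ_{|T|=j} det A(T,T)` is the `j`-th coefficient of `det (1 + X A)`, which does not change under
`U (D Uᴴ) ↦ (D Uᴴ) U = D` for the spectral decomposition `A = U D Uᴴ`; hence it is `e_j(λ)`.
-/

open Finset Polynomial
open scoped ComplexOrder

section PrincipalMinors

variable {R : Type*} [CommRing R] {m n : Type*} [Fintype m] [Fintype n] [DecidableEq m]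
  [DecidableEq n]

theorem sum_principal_minors_mul_comm (P : Matrix m n R) (Q : Matrix n m R) (k : ℕ) :
    ∑ s ∈ univ.powersetCard k, ((P * Q).submatrix (Subtype.val : s → m) Subtype.val).det =
      ∑ s ∈ univ.powersetCard k, ((Q * P).submatrix (Subtype.val : s → n) Subtype.val).det := by
  rw [← coeff_det_one_add_X_smul_eq_sum_minors, ← coeff_det_one_add_X_smul_eq_sum_minors,
    Matrix.map_mul, Matrix.map_mul, ← Matrix.smul_mul, det_one_add_mul_comm, Matrix.mul_smul]

theorem sum_principal_minors_diagonal (d : n → R) (k : ℕ) :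
    ∑ s ∈ univ.powersetCard k, ((diagonal d).submatrix (Subtype.val : s → n) Subtype.val).det =
      ∑ s ∈ univ.powersetCard k, ∏ i ∈ s, d i := by
  refine sum_congr rfl fun s _ => ?_
  rw [submatrix_diagonal _ _ Subtype.val_injective, det_diagonal]
  exact prod_coe_sort s d

end PrincipalMinors

theorem Matrix.IsHermitian.sum_principal_minors_eq_sum_prod_eigenvalues {𝕜 n : Type*} [RCLike 𝕜]
    [Fintype n] [DecidableEq n] {A : Matrix n n 𝕜} (hA : A.IsHermitian) (k : ℕ) :
    ∑ s ∈ univ.powersetCard k, (A.submatrix (Subtype.val : s → n) Subtype.val).det =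
      ∑ s ∈ univ.powersetCard k, ∏ i ∈ s, (hA.eigenvalues i : 𝕜) := by
  set U : Matrix n n 𝕜 := (hA.eigenvectorUnitary : Matrix n n 𝕜)
  have hspec : A = U * (diagonal (RCLike.ofReal ∘ hA.eigenvalues) * star U) := by
    simpa [Matrix.mul_assoc] using hA.spectral_theorem
  refine (congrArg (fun B : Matrix n n 𝕜 => ∑ s ∈ univ.powersetCard k,
    (B.submatrix (Subtype.val : s → n) Subtype.val).det) hspec).trans ?_
  rw [sum_principal_minors_mul_comm, Matrix.mul_assoc, Unitary.coe_star_mul_self, Matrix.mul_one]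
  exact sum_principal_minors_diagonal _ k

theorem Matrix.PosSemidef.det_eq_zero_of_det_submatrix_eq_zero {𝕜 m n : Type*} [RCLike 𝕜]
    [Fintype m] [Fintype n] [DecidableEq m] [DecidableEq n] {M : Matrix n n 𝕜}
    (hM : M.PosSemidef) {e : m → n} (he : Function.Injective e)
    (h : (M.submatrix e e).det = 0) : M.det = 0 := by
  by_contra hdet
  exact (isUnit_iff_isUnit_det _).mp ((hM.posDef_iff_det_ne_zero.mpr hdet).submatrix he).isUnit
    |>.ne_zero h

theorem Matrix.PosSemidef.det_subSS_eq_zero_of_subset {N : ℕ} {A : Matrix (Fin N) (Fin N) ℝ}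
    (hA : A.PosSemidef) {S T : Finset (Fin N)} (hST : S ⊆ T) (h : (subSS A S).det = 0) :
    (subSS A T).det = 0 :=
  (hA.submatrix Subtype.val).det_eq_zero_of_det_submatrix_eq_zero
    (Set.inclusion_injective (s := (S : Set (Fin N))) (t := T) hST) h

theorem Finset.sum_powersetCard_sum_compl_insert {α M : Type*} [Fintype α] [DecidableEq α]
    [AddCommMonoid M] (k : ℕ) (f : Finset α → M) :
    ∑ S ∈ univ.powersetCard k, ∑ j ∈ Sᶜ, f (insert j S) =
      (k + 1) • ∑ T ∈ univ.powersetCard (k + 1), f T := by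
  have hcount : (k + 1) • ∑ T ∈ univ.powersetCard (k + 1), f T =
      ∑ T ∈ univ.powersetCard (k + 1), ∑ _j ∈ T, f T := by
    rw [smul_sum]
    refine sum_congr rfl fun T hT => ?_
    rw [sum_const, (mem_powersetCard.mp hT).2]
  rw [hcount, sum_sigma', sum_sigma']
  refine sum_nbij' (fun x => ⟨insert x.2 x.1, x.2⟩) (fun x => ⟨x.1.erase x.2, x.2⟩)
    ?_ ?_ ?_ ?_ fun _ _ => rfl
  · rintro ⟨S, j⟩
    simp +contextual [card_insert_of_notMem]
  · rintro ⟨T, j⟩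
    simp +contextual [card_erase_of_mem]
  · rintro ⟨S, j⟩
    simp +contextual
  · rintro ⟨T, j⟩
    simp +contextual [insert_erase]

/-- `⁻¹` is `Matrix.inv`, which is `0` when `A(S,S)` is singular; such `S` carry the weight
`det A(S,S) = 0`, so the expectation is the same as with the pseudoinverse. -/
noncomputable def nystromResidual {N : ℕ} (A : Matrix (Fin N) (Fin N) ℝ) (S : Finset (Fin N)) :
    Matrix (Fin N) (Fin N) ℝ :=
  A - subCols A S * (subSS A S)⁻¹ * subRows A S

section NystromResidual

variable {N : ℕ} {A : Matrix (Fin N) (Fin N) ℝ} {S : Finset (Fin N)}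

theorem nystromResidual_apply_of_mem (hS : IsUnit (subSS A S).det) {i : Fin N} (hi : i ∈ S)
    (j : Fin N) : nystromResidual A S i j = 0 := by
  have hrow : (subCols A S * (subSS A S)⁻¹ * subRows A S) i j =
      (subSS A S * (subSS A S)⁻¹ * subRows A S) ⟨i, hi⟩ j := rfl
  rw [nystromResidual, Matrix.sub_apply, hrow, mul_nonsing_inv _ hS, Matrix.one_mul]
  exact sub_self _

theorem det_subSS_insert (hS : IsUnit (subSS A S).det) {j : Fin N} (hj : j ∉ S) :
    (subSS A (insert j S)).det = (subSS A S).det * nystromResidual A S j j := by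
  let e : {x // x ∈ S} ⊕ Unit ≃ {x // x ∈ insert j S} :=
    (Equiv.Set.insert (s := (S : Set (Fin N))) hj).symm.trans
      (Equiv.setCongr (coe_insert j S).symm)
  have := (subSS A S).invertibleOfIsUnitDet hS
  have hblocks : (subSS A (insert j S)).submatrix e e =
      fromBlocks (subSS A S) (of fun s _ => A s j) (of fun _ s => A j s) (of fun _ _ => A j j) := by
    ext (s | _) (t | _) <;> rfl
  rw [← det_submatrix_equiv_self e, hblocks, det_fromBlocks₁₁, invOf_eq_nonsing_inv,
    det_unique (n := Unit)]
  rfl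

theorem det_subSS_mul_trace_nystromResidual_of_isUnit (hS : IsUnit (subSS A S).det) :
    (subSS A S).det * (nystromResidual A S).trace = ∑ j ∈ Sᶜ, (subSS A (insert j S)).det := by
  rw [trace, ← sum_add_sum_compl S,
    sum_eq_zero (f := (nystromResidual A S).diag) fun i hi => nystromResidual_apply_of_mem hS hi i,
    zero_add, mul_sum]
  exact sum_congr rfl fun j hj => (det_subSS_insert hS (mem_compl.mp hj)).symm

theorem Matrix.PosSemidef.det_subSS_mul_trace_nystromResidual (hA : A.PosSemidef)
    (S : Finset (Fin N)) :
    (subSS A S).det * (nystromResidual A S).trace = ∑ j ∈ Sᶜ, (subSS A (insert j S)).det := by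
  by_cases hS : IsUnit (subSS A S).det
  · exact det_subSS_mul_trace_nystromResidual_of_isUnit hS
  · rw [isUnit_iff_ne_zero, not_not] at hS
    rw [hS, zero_mul]
    exact (sum_eq_zero fun j _ => hA.det_subSS_eq_zero_of_subset (subset_insert j S) hS).symm

end NystromResidual

theorem kdpp_expected_error_general {N k : ℕ} (A : Matrix (Fin N) (Fin N) ℝ)
    (hA : A.PosSemidef) :
    ∑ S ∈ Finset.powersetCard k (Finset.univ : Finset (Fin N)),
        ((subSS A S).det /
            ∑ S' ∈ Finset.powersetCard k (Finset.univ : Finset (Fin N)), (subSS A S').det) *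
          (A - subCols A S * (subSS A S)⁻¹ * subRows A S).trace
      = (k + 1) *
          (∑ T ∈ Finset.powersetCard (k + 1) (Finset.univ : Finset (Fin N)),
              ∏ i ∈ T, hA.isHermitian.eigenvalues i) /
          (∑ T ∈ Finset.powersetCard k (Finset.univ : Finset (Fin N)),
              ∏ i ∈ T, hA.isHermitian.eigenvalues i) := by
  have hminors (j : ℕ) : ∑ S ∈ univ.powersetCard j, (subSS A S).det =
      ∑ T ∈ univ.powersetCard j, ∏ i ∈ T, hA.isHermitian.eigenvalues i :=
    hA.isHermitian.sum_principal_minors_eq_sum_prod_eigenvalues j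
  calc _ = (∑ S ∈ univ.powersetCard k, (subSS A S).det * (nystromResidual A S).trace) /
        ∑ S ∈ univ.powersetCard k, (subSS A S).det := by
        rw [sum_div]
        exact sum_congr rfl fun S _ => div_mul_eq_mul_div _ _ _
    _ = (k + 1) * (∑ T ∈ univ.powersetCard (k + 1), (subSS A T).det) /
        ∑ S ∈ univ.powersetCard k, (subSS A S).det := by
        rw [sum_congr rfl fun S _ => hA.det_subSS_mul_trace_nystromResidual S,
          sum_powersetCard_sum_compl_insert k fun T => (subSS A T).det, nsmul_eq_mul]
        push_cast
        rfl
    _ = _ := by rw [hminors, hminors]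

/-- The expected trace-norm error of `k`-DPP sampling equals
`(k+1)·e_{k+1}(λ)/e_k(λ)`.  Subsets with singular `A(S,S)` have zero probability, so using
the (Mathlib) inverse — which agrees with the Moore–Penrose pseudoinverse on the invertible
sets — gives the same expectation. -/
theorem kdpp_expected_error {N k : ℕ} (A : Matrix (Fin N) (Fin N) ℝ)
    (hA : A.PosSemidef) (hrank : k < A.rank) :
    ∑ S ∈ Finset.powersetCard k (Finset.univ : Finset (Fin N)),
        ((subSS A S).det /
            ∑ S' ∈ Finset.powersetCard k (Finset.univ : Finset (Fin N)), (subSS A S').det) *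
          (A - subCols A S * (subSS A S)⁻¹ * subRows A S).trace
      = (k + 1) *
          (∑ T ∈ Finset.powersetCard (k + 1) (Finset.univ : Finset (Fin N)),
              ∏ i ∈ T, hA.isHermitian.eigenvalues i) /
          (∑ T ∈ Finset.powersetCard k (Finset.univ : Finset (Fin N)),
              ∏ i ∈ T, hA.isHermitian.eigenvalues i) :=
  kdpp_expected_error_general A hA
end

section
/- Greedy-pivot trace decay: if at each step i the pivot is a largest diagonal entry of the residual A⁽ⁱ⁻¹⁾, and A⁽ⁱ⁻¹⁾ has at most N - i + 1 nonzero diagonal entries, then tr A⁽ⁱ⁾ ≤ (1 - 1/(N-i+1)) tr A⁽ⁱ⁻¹⁾; consequently tr A⁽ᵏ⁾ ≤ ((N-k)/N) tr A. -/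
open Matrix

/-- Greedy-pivot trace decay: if at each step the pivot is a largest diagonal entry of the
residual, and the residual at step `i` (0-indexed) has at most `N - i` nonzero diagonal
entries, then `tr A⁽ⁱ⁺¹⁾ ≤ (1 - 1/(N-i)) tr A⁽ⁱ⁾`, and consequently
`tr A⁽ᵏ⁾ ≤ ((N-k)/N) tr A`. -/
theorem greedy_trace_decay {N k : ℕ} (hN : 0 < N) (hkN : k ≤ N)
    (M : ℕ → Matrix (Fin N) (Fin N) ℝ) (s : ℕ → Fin N)
    (hpsd : ∀ i, (M i).PosSemidef)
    (hpos : ∀ i < k, 0 < M i (s i) (s i))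
    (hmax : ∀ i < k, ∀ j, M i j j ≤ M i (s i) (s i))
    (hstep : ∀ i < k, M (i + 1)
      = M i - (M i (s i) (s i))⁻¹ • Matrix.vecMulVec (fun a => M i a (s i)) (M i (s i)))
    (hcard : ∀ i < k, (Finset.univ.filter (fun j => M i j j ≠ 0)).card ≤ N - i) :
    (∀ i < k, (M (i + 1)).trace ≤ (1 - 1 / ((N : ℝ) - i)) * (M i).trace)
    ∧ (M k).trace ≤ (((N : ℝ) - k) / N) * (M 0).trace := by
  have key : ∀ i < k, (M (i + 1)).trace ≤ (1 - 1 / ((N : ℝ) - i)) * (M i).trace := by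
    intro i hi
    set p := M i (s i) (s i) with hp_def
    have hp : 0 < p := hpos i hi
    have hiN : i < N := lt_of_lt_of_le hi hkN
    have hNi : (1 : ℝ) ≤ (N : ℝ) - i := by
      have : (i : ℝ) + 1 ≤ N := by exact_mod_cast hiN
      linarith
    have hNi0 : (0 : ℝ) < (N : ℝ) - i := by linarith
    have hsym : ∀ a b, M i a b = M i b a := by
      intro a b
      have := (hpsd i).1
      have h := congrFun (congrFun this a) b
      simpa [Matrix.conjTranspose_apply] using h.symm
    -- trace formula
    have htr : (M (i + 1)).trace
        = (M i).trace - p⁻¹ * ∑ a, M i (s i) a * M i (s i) a := by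
      rw [hstep i hi, Matrix.trace_sub, Matrix.trace_smul]
      congr 1
      rw [Matrix.trace]
      simp only [Matrix.diag, Matrix.vecMulVec_apply, smul_eq_mul]
      simp only [Finset.mul_sum]
      apply Finset.sum_congr rfl
      intro a _
      rw [hsym a (s i)]
    have hsum : p * p ≤ ∑ a, M i (s i) a * M i (s i) a := by
      have := Finset.single_le_sum
        (f := fun a => M i (s i) a * M i (s i) a)
        (fun a _ => mul_self_nonneg _) (Finset.mem_univ (s i))
      simpa using this
    have hstep1 : (M (i + 1)).trace ≤ (M i).trace - p := by
      rw [htr]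
      have : p ≤ p⁻¹ * ∑ a, M i (s i) a * M i (s i) a := by
        rw [le_inv_mul_iff₀ hp]
        simpa using hsum
      linarith
    -- trace bound
    have htrb : (M i).trace ≤ ((N : ℝ) - i) * p := by
      have h1 : (M i).trace = ∑ j ∈ Finset.univ.filter (fun j => M i j j ≠ 0), M i j j := by
        rw [Matrix.trace]
        rw [← Finset.sum_filter_ne_zero]
        rfl
      have h2 : ∑ j ∈ Finset.univ.filter (fun j => M i j j ≠ 0), M i j j
          ≤ (Finset.univ.filter (fun j => M i j j ≠ 0)).card • p :=
        Finset.sum_le_card_nsmul _ _ p (fun j _ => hmax i hi j)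
      have h3 : ((Finset.univ.filter (fun j => M i j j ≠ 0)).card : ℝ) ≤ (N : ℝ) - i := by
        have := hcard i hi
        have h4 : ((Finset.univ.filter (fun j => M i j j ≠ 0)).card : ℝ) ≤ ((N - i : ℕ) : ℝ) := by
          exact_mod_cast this
        rwa [Nat.cast_sub hiN.le] at h4
      calc (M i).trace = _ := h1
        _ ≤ _ := h2
        _ = ((Finset.univ.filter (fun j => M i j j ≠ 0)).card : ℝ) * p := by
            rw [nsmul_eq_mul]
        _ ≤ ((N : ℝ) - i) * p := by
            exact mul_le_mul_of_nonneg_right h3 hp.le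
    have hpge : (M i).trace / ((N : ℝ) - i) ≤ p := by
      rw [div_le_iff₀ hNi0]
      linarith [htrb]
    calc (M (i + 1)).trace ≤ (M i).trace - p := hstep1
      _ ≤ (M i).trace - (M i).trace / ((N : ℝ) - i) := by linarith
      _ = (1 - 1 / ((N : ℝ) - i)) * (M i).trace := by ring
  refine ⟨key, ?_⟩
  have main : ∀ j ≤ k, (M j).trace ≤ (((N : ℝ) - j) / N) * (M 0).trace := by
    intro j hj
    induction j with
    | zero =>
      simp only [Nat.cast_zero, sub_zero]
      rw [div_self (by exact_mod_cast hN.ne'), one_mul]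
    | succ n ih =>
      have hn : n < k := hj
      have hnN : n < N := lt_of_lt_of_le hn hkN
      have hNn : (1 : ℝ) ≤ (N : ℝ) - n := by
        have : (n : ℝ) + 1 ≤ N := by exact_mod_cast hnN
        linarith
      have hfac : (0 : ℝ) ≤ 1 - 1 / ((N : ℝ) - n) := by
        have h1 : 1 / ((N : ℝ) - n) ≤ 1 := by
          rw [div_le_one (by linarith)]; linarith
        linarith
      have h0 := key n hn
      have h1 := ih hn.le
      calc (M (n + 1)).trace ≤ (1 - 1 / ((N : ℝ) - n)) * (M n).trace := h0
        _ ≤ (1 - 1 / ((N : ℝ) - n)) * ((((N : ℝ) - n) / N) * (M 0).trace) :=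
            mul_le_mul_of_nonneg_left h1 hfac
        _ = (((N : ℝ) - (n + 1 : ℕ)) / N) * (M 0).trace := by
            have hNn0 : ((N : ℝ) - n) ≠ 0 := by linarith
            have hN0 : (N : ℝ) ≠ 0 := by exact_mod_cast hN.ne'
            push_cast
            field_simp
            ring
  exact main k le_rfl
end

section
/- For the M×M matrix C_{M,δ} with ones on the diagonal and δ ∈ (0,1) off the diagonal, the Schur complement with respect to any j distinct columns (1 ≤ j < M) has trace (M - j)(1 + 1/(δ⁻¹ + j - 1))(1 - δ). -/
/-!
Every block of `C = (1-δ)I + δJ` is again of the form `aI + bJ` (`b J` off the diagonal), and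
this family is closed under products and inverses because `J * J = n • J`; in particular
`(aI + bJ)⁻¹ = a⁻¹ (I - b/(a + n b) J)`. So the Schur complement is `(1-δ)I + βJ` for an explicit
scalar `β`, and its trace is `(M - j)(1 - δ + β)`.
-/

open Matrix

local notation "𝟙" => Matrix.of fun _ _ => 1

namespace Matrix

section Ones

variable {l m n R : Type*} [Fintype m]

theorem ones_mul_ones [NonAssocSemiring R] :
    (𝟙 : Matrix l m R) * (𝟙 : Matrix m n R) = (Fintype.card m : R) • (𝟙 : Matrix l n R) := by
  ext i k
  simp [mul_apply]

theorem trace_ones [AddCommMonoidWithOne R] : trace (𝟙 : Matrix m m R) = Fintype.card m := by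
  simp [trace]

end Ones

section ScalarAddOnes

variable {l m n R : Type*} [DecidableEq l]

theorem submatrix_smul_one_add_smul_ones [DecidableEq m] [Semiring R] (a b : R) {e : m → l}
    (he : Function.Injective e) :
    (a • 1 + b • 𝟙 : Matrix l l R).submatrix e e = a • 1 + b • (𝟙 : Matrix m m R) := by
  ext i k
  simp [one_apply, he.eq_iff]

theorem submatrix_smul_one_add_smul_ones_of_ne [Semiring R] (a b : R) {f : m → l} {g : n → l}
    (hfg : ∀ i k, f i ≠ g k) :
    (a • 1 + b • 𝟙 : Matrix l l R).submatrix f g = b • (𝟙 : Matrix m n R) := by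
  ext i k
  simp [hfg i k]

variable [Fintype m] [Fintype n] [DecidableEq m] [DecidableEq n] [Field R]

theorem inv_smul_one_add_smul_ones {a b : R} (ha : a ≠ 0) (hab : a + Fintype.card n * b ≠ 0) :
    (a • 1 + b • 𝟙 : Matrix n n R)⁻¹ =
      a⁻¹ • (1 - (b / (a + Fintype.card n * b)) • (𝟙 : Matrix n n R)) := by
  apply inv_eq_right_inv
  simp only [Matrix.mul_smul, Matrix.mul_sub, Matrix.mul_one, Matrix.add_mul, Matrix.smul_mul,
    Matrix.one_mul, ones_mul_ones]
  match_scalars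
  · field_simp
  · rw [mul_one, mul_one, mul_one, mul_comm b (Fintype.card n : R), div_mul_cancel₀ b hab,
      sub_self, mul_zero]

theorem trace_schur_smul_one_add_smul_ones {a b : R} (ha : a ≠ 0)
    (hab : a + Fintype.card n * b ≠ 0) :
    trace ((a • 1 + b • 𝟙 : Matrix m m R) -
        (b • 𝟙 : Matrix m n R) * (a • 1 + b • 𝟙 : Matrix n n R)⁻¹ * (b • 𝟙 : Matrix n m R)) =
      Fintype.card m * (a + b - b ^ 2 * Fintype.card n / (a + Fintype.card n * b)) := by
  rw [inv_smul_one_add_smul_ones ha hab]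
  simp only [Matrix.mul_smul, Matrix.smul_mul, Matrix.mul_sub, Matrix.sub_mul, Matrix.mul_one,
    ones_mul_ones, trace_sub, trace_add, trace_smul, trace_one, trace_ones, smul_eq_mul]
  have hab' : a + b * Fintype.card n ≠ 0 := by rwa [mul_comm]
  field_simp
  ring

end ScalarAddOnes

end Matrix

theorem schur_trace_C_general {M : ℕ} (δ : ℝ) (hδ : δ ∈ Set.Ioo (0 : ℝ) 1)
    (C : Matrix (Fin M) (Fin M) ℝ)
    (hC : C = (1 - δ) • (1 : Matrix (Fin M) (Fin M) ℝ) + δ • Matrix.of (fun _ _ => (1 : ℝ)))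
    (S : Finset (Fin M)) (j : ℕ) (hcard : S.card = j) (hjM : j < M) :
    (C.submatrix (Subtype.val : {x // x ∉ S} → Fin M) (Subtype.val : {x // x ∉ S} → Fin M)
      - C.submatrix (Subtype.val : {x // x ∉ S} → Fin M) (Subtype.val : {x // x ∈ S} → Fin M)
        * (C.submatrix (Subtype.val : {x // x ∈ S} → Fin M)
            (Subtype.val : {x // x ∈ S} → Fin M))⁻¹
        * C.submatrix (Subtype.val : {x // x ∈ S} → Fin M)
            (Subtype.val : {x // x ∉ S} → Fin M)).trace
      = ((M : ℝ) - j) * (1 + 1 / (δ⁻¹ + j - 1)) * (1 - δ) := by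
  obtain ⟨hδ0, hδ1⟩ := hδ
  have hcardS : Fintype.card {x // x ∈ S} = j := by simp [hcard]
  have hcardSc : Fintype.card {x // x ∉ S} = M - j := by
    simp [Fintype.card_subtype_compl, hcard]
  have hpos : 0 < 1 - δ + j * δ := by positivity
  subst hC
  rw [submatrix_smul_one_add_smul_ones _ _ Subtype.val_injective,
    submatrix_smul_one_add_smul_ones _ _ Subtype.val_injective,
    submatrix_smul_one_add_smul_ones_of_ne _ _ fun i k h => i.2 (h ▸ k.2),
    submatrix_smul_one_add_smul_ones_of_ne _ _ fun i k h => k.2 (h ▸ i.2),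
    trace_schur_smul_one_add_smul_ones (by linarith) (by rw [hcardS]; exact hpos.ne'),
    hcardS, hcardSc, Nat.cast_sub hjM.le]
  have hshift : δ⁻¹ + j - 1 = (1 - δ + j * δ) / δ := by field_simp; ring
  rw [hshift]
  field_simp
  ring

/-- For the `M×M` matrix `C = (1-δ)I + δJ` (ones on the diagonal, `δ` off the diagonal),
the Schur complement with respect to any `j` distinct columns (`1 ≤ j < M`) has trace
`(M - j)(1 + 1/(δ⁻¹ + j - 1))(1 - δ)`. -/
theorem schur_trace_C {M : ℕ} (δ : ℝ) (hδ : δ ∈ Set.Ioo (0 : ℝ) 1)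
    (C : Matrix (Fin M) (Fin M) ℝ)
    (hC : C = (1 - δ) • (1 : Matrix (Fin M) (Fin M) ℝ) + δ • Matrix.of (fun _ _ => (1 : ℝ)))
    (S : Finset (Fin M)) (j : ℕ) (hcard : S.card = j) (hj : 1 ≤ j) (hjM : j < M) :
    (C.submatrix (Subtype.val : {x // x ∉ S} → Fin M) (Subtype.val : {x // x ∉ S} → Fin M)
      - C.submatrix (Subtype.val : {x // x ∉ S} → Fin M) (Subtype.val : {x // x ∈ S} → Fin M)
        * (C.submatrix (Subtype.val : {x // x ∈ S} → Fin M)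
            (Subtype.val : {x // x ∈ S} → Fin M))⁻¹
        * C.submatrix (Subtype.val : {x // x ∈ S} → Fin M)
            (Subtype.val : {x // x ∉ S} → Fin M)).trace
      = ((M : ℝ) - j) * (1 + 1 / (δ⁻¹ + j - 1)) * (1 - δ) :=
  schur_trace_C_general δ hδ C hC S j hcard hjM
end
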